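/- Let ℜ be a structure on the real field, and suppose there is a definable set E ⊆ ℝ with empty interior that is dense in some nonempty open interval I. Then both I ∩ E and I \ E equal their own transcendental parts, and #I(ℚ,T) = #(I∩E)(ℚ,T) + #(I\E)(ℚ,T); in particular, if both counts were o(T), then #I(ℚ,T) = o(T), contradicting #I(ℚ,T) ≥ c·T² for some c > 0 depending on I. -/

import Mathlib

/-- The height of a rational number `p/q` in lowest terms is `max |p| |q|`. -/
def qheight (q : ℚ) : ℕ := max q.num.natAbs q.den

/-- The number of rational points of `X ⊆ ℝ` of height at most `T`. -/
noncomputable def ratCount (X : Set ℝ) (T : ℝ) : ℕ :=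
  Set.ncard {q : ℚ | (q : ℝ) ∈ X ∧ (qheight q : ℝ) ≤ T}

/-- A subset of `ℝ` is semialgebraic iff it is a finite union of sets of the form
`{x | p(x) = 0 ∧ q(x) > 0}` for polynomials `p, q`. -/
def IsSemialgebraic (S : Set ℝ) : Prop :=
  ∃ (k : ℕ) (p q : Fin k → Polynomial ℝ),
    S = ⋃ i, {x : ℝ | (p i).eval x = 0 ∧ 0 < (q i).eval x}

/-- The transcendental part of `E ⊆ ℝ`: `E` with all infinite semialgebraic
subsets removed. -/
def transPart (E : Set ℝ) : Set ℝ :=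
  E \ ⋃₀ {S : Set ℝ | S ⊆ E ∧ IsSemialgebraic S ∧ S.Infinite}

lemma semialg_infinite_interior {S : Set ℝ} (hS : IsSemialgebraic S) (hinf : S.Infinite) :
    (interior S).Nonempty := by
  obtain ⟨k, p, q, rfl⟩ := hS
  have : ∃ i, {x : ℝ | (p i).eval x = 0 ∧ 0 < (q i).eval x}.Infinite := by
    by_contra h
    push_neg at h
    exact hinf (Set.finite_iUnion h)
  obtain ⟨i, hi⟩ := this
  have hp : p i = 0 := by
    by_contra hp
    exact hi (Set.Finite.subset (Polynomial.finite_setOf_isRoot hp) (fun x hx => hx.1))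
  have hpiece : {x : ℝ | (p i).eval x = 0 ∧ 0 < (q i).eval x} = {x : ℝ | 0 < (q i).eval x} := by
    ext x; simp [hp]
  have hopen : IsOpen {x : ℝ | 0 < (q i).eval x} :=
    isOpen_lt continuous_const (q i).continuous
  have hsub : {x : ℝ | 0 < (q i).eval x} ⊆ interior (⋃ i, {x : ℝ | (p i).eval x = 0 ∧ 0 < (q i).eval x}) := by
    apply interior_maximal _ hopen
    rw [← hpiece]
    exact Set.subset_iUnion (fun i => {x : ℝ | (p i).eval x = 0 ∧ 0 < (q i).eval x}) i
  obtain ⟨x, hx⟩ := hi.nonempty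
  rw [hpiece] at hi
  exact ⟨_, hsub hi.nonempty.choose_spec⟩

lemma transPart_eq_self {X : Set ℝ}
    (h : ∀ U : Set ℝ, IsOpen U → U.Nonempty → ¬ U ⊆ X) : transPart X = X := by
  have : {S : Set ℝ | S ⊆ X ∧ IsSemialgebraic S ∧ S.Infinite} = ∅ := by
    ext S
    simp only [Set.mem_setOf_eq, Set.mem_empty_iff_false, iff_false, not_and]
    intro hSX hsa hinf
    obtain ⟨x, hx⟩ := semialg_infinite_interior hsa hinf
    exact h (interior S) isOpen_interior ⟨x, hx⟩ ((interior_subset).trans hSX)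
  rw [transPart, this, Set.sUnion_empty, Set.diff_empty]

lemma finite_height (T : ℝ) : {q : ℚ | (qheight q : ℝ) ≤ T}.Finite := by
  set n : ℕ := ⌈T⌉₊ with hn
  apply Set.Finite.of_finite_image (f := fun q : ℚ => (q.num, q.den))
  · apply Set.Finite.subset
      (Set.Finite.prod (Set.finite_Icc (-(n:ℤ)) (n:ℤ)) (Set.finite_Icc 0 n))
    rintro ⟨x, y⟩ ⟨q, hq, hqe⟩
    obtain ⟨rfl, rfl⟩ : q.num = x ∧ q.den = y := Prod.mk.injEq .. ▸ Prod.ext_iff.mp hqe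
    have hq' : qheight q ≤ n := by
      have h1 : (qheight q : ℝ) ≤ (n : ℝ) := le_trans hq (Nat.le_ceil T)
      exact_mod_cast h1
    have h2 : q.num.natAbs ≤ n := le_trans (le_max_left _ _) hq'
    have h3 : q.den ≤ n := le_trans (le_max_right _ _) hq'
    refine ⟨⟨?_, ?_⟩, Nat.zero_le _, h3⟩ <;> omega
  · intro q hq q' hq' h
    exact Rat.ext (congrArg Prod.fst h) (congrArg Prod.snd h)

lemma ratCount_split (X E : Set ℝ) (T : ℝ) :
    ratCount X T = ratCount (X ∩ E) T + ratCount (X \ E) T := by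
  set A := {q : ℚ | (q : ℝ) ∈ X ∩ E ∧ (qheight q : ℝ) ≤ T}
  set B := {q : ℚ | (q : ℝ) ∈ X \ E ∧ (qheight q : ℝ) ≤ T}
  have hU : {q : ℚ | (q : ℝ) ∈ X ∧ (qheight q : ℝ) ≤ T} = A ∪ B := by
    ext q
    by_cases h : (q : ℝ) ∈ E <;> simp [A, B, h] <;> tauto
  have hd : Disjoint A B := by
    rw [Set.disjoint_left]
    rintro q ⟨⟨_, hq⟩, _⟩ ⟨⟨_, hq'⟩, _⟩
    exact hq' hq
  have hAf : A.Finite := (finite_height T).subset (fun q hq => hq.2)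
  have hBf : B.Finite := (finite_height T).subset (fun q hq => hq.2)
  rw [ratCount, hU, Set.ncard_union_eq hd hAf hBf]
  rfl


lemma sum_inv_sq_aux (m : ℕ) :
    ∑ j ∈ Finset.Icc 3 (m+2), (1:ℝ)/(j:ℝ)^2 ≤ 1/2 - 1/((m:ℝ)+2) := by
  induction m with
  | zero => norm_num
  | succ n ih =>
    rw [show n+1+2 = (n+2)+1 from rfl, Finset.sum_Icc_succ_top (by omega)]
    have h2 : (0:ℝ) < (n:ℝ)+2 := by positivity
    have h3 : (0:ℝ) < (n:ℝ)+3 := by positivity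
    have key : (1:ℝ)/(((n+2)+1:ℕ):ℝ)^2 ≤ 1/((n:ℝ)+2) - 1/((n:ℝ)+3) := by
      push_cast
      rw [div_sub_div _ _ h2.ne' h3.ne', div_le_div_iff₀ (by positivity) (by positivity)]
      ring_nf
      nlinarith [sq_nonneg ((n:ℝ)+2)]
    push_cast
    push_cast at ih key
    have e : (n:ℝ)+1+2 = (n:ℝ)+3 := by ring
    rw [e]
    linarith

lemma sum_inv_sq (M : ℕ) : ∑ j ∈ Finset.Icc 3 M, (1:ℝ)/(j:ℝ)^2 ≤ 1/2 := by
  match M with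
  | 0 => simp
  | 1 => simp
  | 2 => simp
  | (m+3) =>
    have := sum_inv_sq_aux (m+1)
    have h1 : (0:ℝ) < 1/((((m+1:ℕ)):ℝ)+2) := by positivity
    calc ∑ j ∈ Finset.Icc 3 (m+3), (1:ℝ)/(j:ℝ)^2
        = ∑ j ∈ Finset.Icc 3 ((m+1)+2), (1:ℝ)/(j:ℝ)^2 := rfl
      _ ≤ 1/2 - 1/((((m+1:ℕ)):ℝ)+2) := this
      _ ≤ 1/2 := by linarith

lemma sum_inv_sq2 (M : ℕ) : ∑ j ∈ Finset.Icc 2 M, (1:ℝ)/(j:ℝ)^2 ≤ 3/4 := by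
  rcases le_or_gt 2 M with h | h
  · have hins : Finset.Icc 2 M = insert 2 (Finset.Icc 3 M) := by
      ext j; simp [Finset.mem_Icc, Finset.mem_insert]; omega
    rw [hins, Finset.sum_insert (by simp [Finset.mem_Icc])]
    have := sum_inv_sq M
    have h2 : (1:ℝ)/(((2:ℕ)):ℝ)^2 = 1/4 := by norm_num
    linarith
  · interval_cases M <;> norm_num

lemma cast_div_gt (n k : ℕ) (hk : 0 < k) : (n:ℝ)/k - 1 < ((n/k : ℕ):ℝ) := by
  have h := Nat.div_add_mod n k
  have h2 := Nat.mod_lt n hk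
  have h3 : n < k * (n/k) + k := by omega
  have h4 : (n:ℝ) < (k:ℝ) * ((n/k : ℕ):ℝ) + k := by exact_mod_cast h3
  rw [sub_lt_iff_lt_add, div_lt_iff₀ (by exact_mod_cast hk)]
  nlinarith

set_option maxHeartbeats 2000000 in
lemma coprime_card (D N : ℕ) (hD : 16 ≤ D) (hN : 4 * D ≤ N) :
    (N:ℝ)^2 / (16 * D) ≤
    ((((Finset.Icc 1 (N/D)) ×ˢ (Finset.Ioc (N/2) N)).filter
      (fun pq : ℕ × ℕ => Nat.Coprime pq.1 pq.2)).card : ℝ) := by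
  set M := N / D with hM
  set grid := (Finset.Icc 1 M) ×ˢ (Finset.Ioc (N/2) N) with hgrid
  have hDpos : 0 < D := by omega
  have hNpos : 0 < N := by omega
  have hgc : grid.card = M * (N - N/2) := by
    rw [hgrid, Finset.card_product, Nat.card_Icc, Nat.card_Ioc, Nat.add_sub_cancel]
  have hcnt1 : ∀ j : ℕ, ((Finset.Icc 1 M).filter (fun p => j ∣ p)).card = M / j := by
    intro j
    rw [show Finset.Icc 1 M = Finset.Ioc 0 M by rfl]
    exact Nat.Ioc_filter_dvd_card_eq_div M j
  have hcnt2 : ∀ j : ℕ, ((Finset.Ioc (N/2) N).filter (fun q => j ∣ q)).card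
      = N / j - (N/2) / j := by
    intro j
    have hsplit : Finset.Ioc 0 (N/2) ∪ Finset.Ioc (N/2) N = Finset.Ioc 0 N :=
      Finset.Ioc_union_Ioc_eq_Ioc (Nat.zero_le _) (Nat.div_le_self N 2)
    have hdisj : Disjoint (Finset.Ioc 0 (N/2)) (Finset.Ioc (N/2) N) := by
      rw [Finset.disjoint_left]
      intro x hx hx'
      simp only [Finset.mem_Ioc] at hx hx'
      omega
    have := Finset.card_union_of_disjoint
      (s := (Finset.Ioc 0 (N/2)).filter (fun q => j ∣ q))
      (t := (Finset.Ioc (N/2) N).filter (fun q => j ∣ q))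
      (hdisj.mono (Finset.filter_subset _ _) (Finset.filter_subset _ _))
    have hfu : (Finset.Ioc 0 (N/2)).filter (fun q => j ∣ q) ∪
        (Finset.Ioc (N/2) N).filter (fun q => j ∣ q)
        = (Finset.Ioc 0 N).filter (fun q => j ∣ q) := by
      rw [← Finset.filter_union, hsplit]
    have hc := congrArg Finset.card hfu
    rw [this] at hc
    rw [Nat.Ioc_filter_dvd_card_eq_div] at hc
    rw [Nat.Ioc_filter_dvd_card_eq_div] at hc
    omega
  have hnon : (grid.filter (fun pq : ℕ × ℕ => ¬ Nat.Coprime pq.1 pq.2)).card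
      ≤ ∑ j ∈ Finset.Icc 2 M, (M / j) * (N / j - (N/2) / j) := by
    have hsub : grid.filter (fun pq : ℕ × ℕ => ¬ Nat.Coprime pq.1 pq.2) ⊆
        (Finset.Icc 2 M).biUnion
          (fun j => grid.filter (fun pq : ℕ × ℕ => j ∣ pq.1 ∧ j ∣ pq.2)) := by
      intro pq hpq
      simp only [Finset.mem_filter] at hpq
      obtain ⟨hgridmem, hnc⟩ := hpq
      have hp1 : 1 ≤ pq.1 ∧ pq.1 ≤ M := by
        have := (Finset.mem_product.mp hgridmem).1
        simpa [Finset.mem_Icc] using this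
      set g := Nat.gcd pq.1 pq.2 with hg
      have hg1 : g ≠ 1 := hnc
      have hgdvd1 : g ∣ pq.1 := Nat.gcd_dvd_left _ _
      have hgdvd2 : g ∣ pq.2 := Nat.gcd_dvd_right _ _
      have hgpos : 2 ≤ g := by
        rcases Nat.lt_or_ge g 2 with h | h
        · interval_cases g
          · exfalso; exact absurd (Nat.eq_zero_of_gcd_eq_zero_left hg.symm) (by omega)
          · exact absurd rfl hg1
        · exact h
      have hgM : g ≤ M := le_trans (Nat.le_of_dvd (by omega) hgdvd1) hp1.2
      rw [Finset.mem_biUnion]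
      exact ⟨g, by simp [Finset.mem_Icc]; omega, by
        simp only [Finset.mem_filter]; exact ⟨hgridmem, hgdvd1, hgdvd2⟩⟩
    calc (grid.filter (fun pq : ℕ × ℕ => ¬ Nat.Coprime pq.1 pq.2)).card
        ≤ ((Finset.Icc 2 M).biUnion
            (fun j => grid.filter (fun pq : ℕ × ℕ => j ∣ pq.1 ∧ j ∣ pq.2))).card :=
          Finset.card_le_card hsub
      _ ≤ ∑ j ∈ Finset.Icc 2 M,
            (grid.filter (fun pq : ℕ × ℕ => j ∣ pq.1 ∧ j ∣ pq.2)).card :=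
          Finset.card_biUnion_le
      _ = ∑ j ∈ Finset.Icc 2 M, (M / j) * (N / j - (N/2) / j) := by
          apply Finset.sum_congr rfl
          intro j _
          rw [hgrid, Finset.filter_product, Finset.card_product, hcnt1, hcnt2]
  have hMpos : 4 ≤ M := by
    rw [hM]
    exact (Nat.le_div_iff_mul_le hDpos).mpr (by omega)
  have hterm : ∀ j ∈ Finset.Icc 2 M,
      (((M / j) * (N / j - (N/2) / j) : ℕ) : ℝ)
        ≤ (M:ℝ) * N / 2 * (1/(j:ℝ)^2) + (M:ℝ)/2 := by
    intro j hj
    simp only [Finset.mem_Icc] at hj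
    have hj2 : (2:ℝ) ≤ (j:ℝ) := by exact_mod_cast hj.1
    have hjpos : (0:ℝ) < (j:ℝ) := by linarith
    have hA : ((M / j : ℕ) : ℝ) ≤ (M:ℝ)/(j:ℝ) := Nat.cast_div_le
    have hdd : (N/2)/j = N/(2*j) := Nat.div_div_eq_div_mul N 2 j
    have hyx : N/(2*j) ≤ N/j := Nat.div_le_div_left (by omega) (by omega)
    have hBle : ((N / j - (N/2)/j : ℕ) : ℝ) ≤ (N:ℝ)/(2*(j:ℝ)) + 1 := by
      rw [hdd, Nat.cast_sub hyx]
      have h1 : ((N / j : ℕ) : ℝ) ≤ (N:ℝ)/(j:ℝ) := Nat.cast_div_le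
      have h2 : (N:ℝ)/((2*j:ℕ):ℝ) - 1 < ((N/(2*j) : ℕ) : ℝ) := cast_div_gt N (2*j) (by omega)
      push_cast at h2
      have : (N:ℝ)/(j:ℝ) - (N:ℝ)/(2*(j:ℝ)) = (N:ℝ)/(2*(j:ℝ)) := by
        field_simp; ring
      linarith
    calc (((M / j) * (N / j - (N/2) / j) : ℕ) : ℝ)
        = ((M / j : ℕ) : ℝ) * ((N / j - (N/2)/j : ℕ) : ℝ) := by push_cast; ring
      _ ≤ ((M:ℝ)/(j:ℝ)) * ((N:ℝ)/(2*(j:ℝ)) + 1) := by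
          apply mul_le_mul hA hBle (Nat.cast_nonneg _)
          positivity
      _ = (M:ℝ) * N / 2 * (1/(j:ℝ)^2) + (M:ℝ)/(j:ℝ) := by
          field_simp
      _ ≤ (M:ℝ) * N / 2 * (1/(j:ℝ)^2) + (M:ℝ)/2 := by
          have : (M:ℝ)/(j:ℝ) ≤ (M:ℝ)/2 :=
            div_le_div_of_nonneg_left (Nat.cast_nonneg _) (by norm_num) hj2
          linarith
  have hsumbound : ((∑ j ∈ Finset.Icc 2 M, (M / j) * (N / j - (N/2) / j) : ℕ) : ℝ)
      ≤ (M:ℝ) * N / 2 * (3/4) + (M:ℝ)/2 * M := by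
    rw [Nat.cast_sum]
    calc (∑ j ∈ Finset.Icc 2 M, (((M / j) * (N / j - (N/2) / j) : ℕ) : ℝ))
        ≤ ∑ j ∈ Finset.Icc 2 M, ((M:ℝ) * N / 2 * (1/(j:ℝ)^2) + (M:ℝ)/2) :=
          Finset.sum_le_sum hterm
      _ = (M:ℝ) * N / 2 * (∑ j ∈ Finset.Icc 2 M, 1/(j:ℝ)^2)
            + (M:ℝ)/2 * (Finset.Icc 2 M).card := by
          rw [Finset.sum_add_distrib, Finset.mul_sum, Finset.sum_const, nsmul_eq_mul]
          ring
      _ ≤ (M:ℝ) * N / 2 * (3/4) + (M:ℝ)/2 * M := by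
          have h1 := sum_inv_sq2 M
          have h2 : ((Finset.Icc 2 M).card : ℝ) ≤ (M:ℝ) := by
            rw [Nat.card_Icc]
            exact_mod_cast Nat.cast_le.mpr (by omega : M + 1 - 2 ≤ M)
          have h3 : (0:ℝ) ≤ (M:ℝ) * N / 2 := by positivity
          have h4 : (0:ℝ) ≤ (M:ℝ)/2 := by positivity
          nlinarith
  have hsplitcard := Finset.card_filter_add_card_filter_not
    (s := grid) (p := fun pq : ℕ × ℕ => Nat.Coprime pq.1 pq.2)
  have hMN : ((M * (N - N/2) : ℕ) : ℝ) ≥ (M:ℝ) * ((N:ℝ)/2) := by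
    have h1 : ((N/2 : ℕ):ℝ) ≤ (N:ℝ)/2 := Nat.cast_div_le
    have h2 : N/2 ≤ N := Nat.div_le_self N 2
    rw [Nat.cast_mul, Nat.cast_sub h2]
    have : (N:ℝ) - ((N/2:ℕ):ℝ) ≥ (N:ℝ)/2 := by linarith
    nlinarith [Nat.cast_nonneg (α := ℝ) M]
  have hMleft : (N:ℝ)/(D:ℝ) - 1 < (M:ℝ) := cast_div_gt N D hDpos
  have hMright : (M:ℝ) ≤ (N:ℝ)/(D:ℝ) := Nat.cast_div_le
  have hcop : ((grid.filter (fun pq : ℕ × ℕ => Nat.Coprime pq.1 pq.2)).card : ℝ)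
      ≥ (M:ℝ) * ((N:ℝ)/2) - ((M:ℝ) * N / 2 * (3/4) + (M:ℝ)/2 * M) := by
    have h1 : (grid.filter (fun pq : ℕ × ℕ => Nat.Coprime pq.1 pq.2)).card
        = grid.card - (grid.filter (fun pq : ℕ × ℕ => ¬ Nat.Coprime pq.1 pq.2)).card := by
      omega
    have h2 : ((grid.filter (fun pq : ℕ × ℕ => ¬ Nat.Coprime pq.1 pq.2)).card : ℝ)
        ≤ (M:ℝ) * N / 2 * (3/4) + (M:ℝ)/2 * M := by
      refine le_trans ?_ hsumbound
      exact_mod_cast hnon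
    have h3 : ((grid.card : ℕ) : ℝ) ≥ (M:ℝ) * ((N:ℝ)/2) := by rw [hgc]; exact hMN
    have h4 : (grid.filter (fun pq : ℕ × ℕ => ¬ Nat.Coprime pq.1 pq.2)).card ≤ grid.card := by
      omega
    rw [h1, Nat.cast_sub h4]
    linarith
  have hD16 : (16:ℝ) ≤ (D:ℝ) := by exact_mod_cast hD
  have hNr : 4*(D:ℝ) ≤ (N:ℝ) := by exact_mod_cast hN
  have hDr : (0:ℝ) < (D:ℝ) := by exact_mod_cast hDpos
  have hNr0 : (0:ℝ) < (N:ℝ) := by exact_mod_cast hNpos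
  refine le_trans ?_ hcop
  have hM0 : (0:ℝ) ≤ (M:ℝ) := Nat.cast_nonneg _
  have key : (M:ℝ) * ((N:ℝ)/2) - ((M:ℝ) * N / 2 * (3/4) + (M:ℝ)/2 * M)
      = (M:ℝ)*N/8 - (M:ℝ)^2/2 := by ring
  rw [key]
  rw [div_le_iff₀ (by positivity)]
  set u := (N:ℝ)/(D:ℝ) with hu
  have hdu : (D:ℝ) * u = N := by rw [hu]; field_simp
  have hA : 0 ≤ 2*(D:ℝ)*(N:ℝ)*((M:ℝ) - u + 1) :=
    mul_nonneg (by positivity) (by linarith)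
  have hB : 0 ≤ 8*(D:ℝ)*(u^2 - (M:ℝ)^2) :=
    mul_nonneg (by positivity) (by nlinarith [mul_self_le_mul_self hM0 hMright])
  have hC : 0 ≤ (D:ℝ)^2*u^2/2 - 8*(D:ℝ)*u^2 := by
    have := mul_nonneg (mul_nonneg hDr.le (sq_nonneg u)) (sub_nonneg.mpr hD16)
    nlinarith
  have hdu2 : (D:ℝ)*u*(N:ℝ) = (N:ℝ)*(N:ℝ) := by rw [hdu]
  have hdu3 : ((D:ℝ)*u)*((D:ℝ)*u) = (N:ℝ)*(N:ℝ) := by rw [hdu]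
  have hDn : 0 ≤ ((N:ℝ) - 4*(D:ℝ))*(N:ℝ) := mul_nonneg (by linarith) hNr0.le
  nlinarith [hA, hB, hC, hdu2, hdu3, hDn]

lemma den_div_dvd (p q : ℕ) : ((p:ℚ)/(q:ℚ)).den ∣ q := by
  have h : (p:ℚ)/(q:ℚ) = Rat.divInt (p:ℤ) (q:ℤ) := by
    rw [Rat.divInt_eq_div]; push_cast; ring
  have := Rat.den_dvd (p:ℤ) (q:ℤ)
  rw [← h] at this
  exact_mod_cast this

lemma ratCount_Ioo_lower (a b : ℝ) (hab : a < b) :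
    ∃ c : ℝ, 0 < c ∧ ∀ᶠ T in Filter.atTop,
      c * T ^ 2 ≤ (ratCount (Set.Ioo a b) T : ℝ) := by
  obtain ⟨s, hs1, hs2⟩ := exists_rat_btwn hab
  obtain ⟨t, ht1, ht2⟩ := exists_rat_btwn hs2
  have hst : s < t := by exact_mod_cast ht1
  set δ : ℚ := t - s with hδ
  have hδpos : 0 < δ := sub_pos.mpr hst
  set C : ℕ := s.num.natAbs + s.den with hC
  have hCpos : 0 < C := Nat.add_pos_right _ s.pos
  set D : ℕ := max 16 ⌈(2/δ : ℚ)⌉₊ with hD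
  have hD16 : 16 ≤ D := le_max_left _ _
  have hDpos : 0 < D := by omega
  have hDδ : (2:ℚ) ≤ δ * D := by
    have h1 : (2/δ : ℚ) ≤ (⌈(2/δ:ℚ)⌉₊ : ℚ) := Nat.le_ceil _
    have h2 : ((⌈(2/δ:ℚ)⌉₊ : ℕ) : ℚ) ≤ (D:ℚ) := by exact_mod_cast le_max_right 16 ⌈(2/δ:ℚ)⌉₊
    have h3 := le_trans h1 h2
    rw [div_le_iff₀ hδpos] at h3
    linarith
  have main : ∀ N : ℕ, 4 * D ≤ N → ∀ T : ℝ, ((C * N : ℕ) : ℝ) ≤ T →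
      (N:ℝ)^2/(16*D) ≤ (ratCount (Set.Ioo a b) T : ℝ) := by
    intro N hN T hT
    have hN64 : 64 ≤ N := by omega
    set P := ((Finset.Icc 1 (N/D)) ×ˢ (Finset.Ioc (N/2) N)).filter
      (fun pq : ℕ × ℕ => Nat.Coprime pq.1 pq.2) with hP
    set f : ℕ × ℕ → ℚ := fun pq => s + (pq.1 : ℚ)/(pq.2 : ℚ) with hf
    have hmem : ∀ pq ∈ P, 1 ≤ pq.1 ∧ pq.1 * D ≤ N ∧ N/2 < pq.2 ∧ pq.2 ≤ N
        ∧ Nat.Coprime pq.1 pq.2 := by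
      intro pq hpq
      rw [hP, Finset.mem_filter, Finset.mem_product, Finset.mem_Icc, Finset.mem_Ioc] at hpq
      refine ⟨hpq.1.1.1, ?_, hpq.1.2.1, hpq.1.2.2, hpq.2⟩
      exact (Nat.le_div_iff_mul_le hDpos).mp hpq.1.1.2
    have hqpos : ∀ pq ∈ P, 0 < pq.2 := by
      intro pq hpq
      have := (hmem pq hpq).2.2.1
      omega
    have hfrac : ∀ pq ∈ P, 0 < (pq.1:ℚ)/(pq.2:ℚ) ∧ (pq.1:ℚ)/(pq.2:ℚ) < δ
        ∧ (pq.1:ℚ)/(pq.2:ℚ) < 1 := by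
      intro pq hpq
      obtain ⟨h1, h2, h3, h4, h5⟩ := hmem pq hpq
      have hq : (0:ℚ) < pq.2 := by exact_mod_cast hqpos pq hpq
      have hp : (0:ℚ) < pq.1 := by exact_mod_cast h1
      have hlt : pq.1 * D < 2 * pq.2 := by omega
      have hfr2 : (pq.1:ℚ)/(pq.2:ℚ) < 2/(D:ℚ) := by
        rw [div_lt_div_iff₀ hq (by exact_mod_cast hDpos)]
        exact_mod_cast hlt
      have h2D : (2:ℚ)/(D:ℚ) ≤ δ := by
        rw [div_le_iff₀ (by exact_mod_cast hDpos)]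
        linarith [hDδ]
      have h2D1 : (2:ℚ)/(D:ℚ) ≤ 1 := by
        rw [div_le_iff₀ (by exact_mod_cast hDpos : (0:ℚ) < (D:ℚ))]
        have : (16:ℚ) ≤ (D:ℚ) := by exact_mod_cast hD16
        linarith
      exact ⟨div_pos hp hq, lt_of_lt_of_le hfr2 h2D, lt_of_lt_of_le hfr2 h2D1⟩
    have hval : ∀ pq ∈ P, s < f pq ∧ f pq < t := by
      intro pq hpq
      obtain ⟨hr0, hrδ, _⟩ := hfrac pq hpq
      constructor
      · rw [hf]; simpa using lt_add_of_pos_right s hr0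
      · rw [hf]
        have : s + (pq.1:ℚ)/(pq.2:ℚ) < s + δ := by linarith
        simpa [hδ] using this
    have hheight : ∀ pq ∈ P, qheight (f pq) ≤ C * N := by
      intro pq hpq
      obtain ⟨h1, h2, h3, h4, h5⟩ := hmem pq hpq
      obtain ⟨hr0, hrδ, hr1⟩ := hfrac pq hpq
      set x := f pq with hx
      set r : ℚ := (pq.1:ℚ)/(pq.2:ℚ) with hr
      have hden_r : r.den ∣ pq.2 := den_div_dvd pq.1 pq.2
      have hden_x : x.den ∣ s.den * pq.2 := by
        have h6 : x.den ∣ s.den * r.den := Rat.add_den_dvd s r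
        exact h6.trans (mul_dvd_mul_left s.den hden_r)
      have hdenle : x.den ≤ C * N := by
        have h7 : x.den ≤ s.den * pq.2 :=
          Nat.le_of_dvd (Nat.mul_pos s.pos (hqpos pq hpq)) hden_x
        calc x.den ≤ s.den * pq.2 := h7
          _ ≤ s.den * N := Nat.mul_le_mul_left _ h4
          _ ≤ C * N := Nat.mul_le_mul_right _ (by omega)
      have habs : |x| ≤ |s| + 1 := by
        calc |x| = |s + r| := by rw [hx, hf, hr]
          _ ≤ |s| + |r| := abs_add_le s r
          _ ≤ |s| + 1 := by
              have : |r| = r := abs_of_pos hr0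
              linarith
      have hnum : x.num.natAbs ≤ C * N := by
        have e1 : (x.num.natAbs : ℚ) = |x| * x.den := by
          have hd : ((x.den:ℚ)) ≠ 0 := by exact_mod_cast x.den_nz
          have hne : (x.num:ℚ) = x * x.den := (div_eq_iff hd).mp (Rat.num_div_den x)
          rw [Nat.cast_natAbs, Int.cast_abs, hne, abs_mul,
            abs_of_nonneg (by positivity : (0:ℚ) ≤ (x.den:ℚ))]
        have e2 : (s.num.natAbs : ℚ) = |s| * s.den := by
          have hd : ((s.den:ℚ)) ≠ 0 := by exact_mod_cast s.den_nz
          have hne : (s.num:ℚ) = s * s.den := (div_eq_iff hd).mp (Rat.num_div_den s)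
          rw [Nat.cast_natAbs, Int.cast_abs, hne, abs_mul,
            abs_of_nonneg (by positivity : (0:ℚ) ≤ (s.den:ℚ))]
        have key : (x.num.natAbs : ℚ) ≤ ((C * N : ℕ) : ℚ) := by
          have hdle : (x.den : ℚ) ≤ (s.den : ℚ) * pq.2 := by
            exact_mod_cast Nat.le_of_dvd (Nat.mul_pos s.pos (hqpos pq hpq)) hden_x
          have hq2N : (pq.2 : ℚ) ≤ (N : ℚ) := by exact_mod_cast h4
          have habs0 : (0:ℚ) ≤ |x| := abs_nonneg x
          calc (x.num.natAbs : ℚ) = |x| * x.den := e1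
            _ ≤ (|s| + 1) * ((s.den:ℚ) * pq.2) := by
                apply mul_le_mul habs hdle (by positivity) (by positivity)
            _ = |s| * s.den * pq.2 + (s.den:ℚ) * pq.2 := by ring
            _ = (s.num.natAbs : ℚ) * pq.2 + (s.den:ℚ) * pq.2 := by rw [e2]
            _ = ((s.num.natAbs + s.den : ℕ) : ℚ) * pq.2 := by push_cast; ring
            _ ≤ ((C:ℕ) : ℚ) * (N:ℚ) := by
                rw [hC]
                apply mul_le_mul_of_nonneg_left hq2N (by positivity)
            _ = ((C * N : ℕ) : ℚ) := by push_cast; ring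
        exact_mod_cast key
      exact max_le hnum hdenle
    have hinj : Set.InjOn f ↑P := by
      intro pq hpq pq' hpq' heq
      have hpq'' : pq ∈ P := Finset.mem_coe.mp hpq
      have hpq''' : pq' ∈ P := Finset.mem_coe.mp hpq'
      obtain ⟨h1, h2, h3, h4, h5⟩ := hmem pq hpq''
      obtain ⟨h1', h2', h3', h4', h5'⟩ := hmem pq' hpq'''
      have hq : (0:ℚ) < pq.2 := by exact_mod_cast hqpos pq hpq''
      have hq' : (0:ℚ) < pq'.2 := by exact_mod_cast hqpos pq' hpq'''
      have heq2 : (pq.1:ℚ)/(pq.2:ℚ) = (pq'.1:ℚ)/(pq'.2:ℚ) := by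
        have := heq
        rw [hf] at this
        simpa using this
      have hcross : pq.1 * pq'.2 = pq'.1 * pq.2 := by
        rw [div_eq_div_iff hq.ne' hq'.ne'] at heq2
        exact_mod_cast heq2
      have hdvd1 : pq.2 ∣ pq'.2 := by
        apply Nat.Coprime.dvd_of_dvd_mul_left h5.symm
        exact ⟨pq'.1, by rw [hcross, Nat.mul_comm]⟩
      have hdvd2 : pq'.2 ∣ pq.2 := by
        apply Nat.Coprime.dvd_of_dvd_mul_left h5'.symm
        exact ⟨pq.1, by rw [← hcross, Nat.mul_comm]⟩
      have hqq : pq.2 = pq'.2 := Nat.dvd_antisymm hdvd1 hdvd2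
      have hpp : pq.1 = pq'.1 := by
        have : pq.1 * pq.2 = pq'.1 * pq.2 := by rw [hqq] at hcross ⊢; omega
        exact Nat.eq_of_mul_eq_mul_right (by exact_mod_cast hq) this
      exact Prod.ext hpp hqq
    -- assemble
    have hsubset : ↑(P.image f) ⊆
        {q : ℚ | (q : ℝ) ∈ Set.Ioo a b ∧ (qheight q : ℝ) ≤ T} := by
      intro x hx
      simp only [Finset.coe_image, Set.mem_image, Finset.mem_coe] at hx
      obtain ⟨pq, hpq, rfl⟩ := hx
      obtain ⟨hv1, hv2⟩ := hval pq hpq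
      refine ⟨⟨?_, ?_⟩, ?_⟩
      · calc a < (s:ℝ) := hs1
          _ < ((f pq : ℚ):ℝ) := by exact_mod_cast hv1
      · calc ((f pq : ℚ):ℝ) < (t:ℝ) := by exact_mod_cast hv2
          _ < b := ht2
      · calc ((qheight (f pq) : ℕ):ℝ) ≤ ((C * N : ℕ):ℝ) := by
              exact_mod_cast hheight pq hpq
          _ ≤ T := hT
    have hfin : {q : ℚ | (q : ℝ) ∈ Set.Ioo a b ∧ (qheight q : ℝ) ≤ T}.Finite :=
      (finite_height T).subset (fun q hq => hq.2)
    have hcard := Set.ncard_le_ncard hsubset hfin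
    rw [Set.ncard_coe_finset, Finset.card_image_of_injOn hinj] at hcard
    calc (N:ℝ)^2/(16*D) ≤ (P.card : ℝ) := coprime_card D N hD16 hN
      _ ≤ (ratCount (Set.Ioo a b) T : ℝ) := by exact_mod_cast hcard
  -- choose N in terms of T
  refine ⟨1/(64*(C:ℝ)^2*(D:ℝ)), by positivity, ?_⟩
  filter_upwards [Filter.eventually_ge_atTop ((8*C*D + 2*C + 2 : ℕ):ℝ)] with T hT
  set N := ⌊T⌋₊ / C with hNdef
  have hCr : (0:ℝ) < (C:ℝ) := by exact_mod_cast hCpos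
  have hDr : (0:ℝ) < (D:ℝ) := by exact_mod_cast hDpos
  have hT0 : (0:ℝ) ≤ T := le_trans (by positivity) hT
  have hTbig : (8*(C:ℝ)*(D:ℝ) + 2*(C:ℝ) + 2) ≤ T := by
    push_cast at hT
    linarith
  have hCN : ((C * N : ℕ) : ℝ) ≤ T := by
    have h1 : C * N ≤ ⌊T⌋₊ := by
      rw [hNdef, Nat.mul_comm]
      exact Nat.div_mul_le_self _ _
    calc ((C * N : ℕ) : ℝ) ≤ (⌊T⌋₊ : ℝ) := by exact_mod_cast h1
      _ ≤ T := Nat.floor_le hT0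
  have hNT : T/(2*(C:ℝ)) ≤ (N:ℝ) := by
    have h1 : (⌊T⌋₊:ℝ)/(C:ℝ) - 1 < (N:ℝ) := cast_div_gt ⌊T⌋₊ C hCpos
    have h2 : T - 1 < (⌊T⌋₊:ℝ) := by
      have := Nat.lt_floor_add_one T
      linarith
    have h4 : (T-1)/(C:ℝ) - 1 < (N:ℝ) := by
      have h3 : (T-1)/(C:ℝ) ≤ (⌊T⌋₊:ℝ)/(C:ℝ) := (div_le_div_iff_of_pos_right hCr).mpr h2.le
      linarith
    rw [div_le_iff₀ (by positivity : (0:ℝ) < 2*(C:ℝ))]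
    have h5 : T - 1 - (C:ℝ) < (N:ℝ)*(C:ℝ) := by
      have h6 := mul_lt_mul_of_pos_right h4 hCr
      have he : ((T-1)/(C:ℝ) - 1)*(C:ℝ) = T - 1 - C := by field_simp
      linarith [he ▸ h6]
    have hCD : (0:ℝ) < (C:ℝ)*(D:ℝ) := mul_pos hCr hDr
    nlinarith
  have hrealN : (4*(D:ℝ)) ≤ (N:ℝ) := by
    have h7 := (div_le_div_iff_of_pos_right (by positivity : (0:ℝ) < 2*(C:ℝ))).mpr hTbig
    have he : (8*(C:ℝ)*(D:ℝ) + 2*(C:ℝ) + 2)/(2*(C:ℝ)) = 4*(D:ℝ) + 1 + 1/(C:ℝ) := by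
      field_simp
      ring
    have h1C : (0:ℝ) < 1/(C:ℝ) := by positivity
    rw [he] at h7
    linarith
  have hN4D : 4*D ≤ N := by exact_mod_cast hrealN
  have hmain := main N hN4D T hCN
  have hT2CN : T ≤ 2*(C:ℝ)*(N:ℝ) := by
    rw [div_le_iff₀ (by positivity : (0:ℝ) < 2*(C:ℝ))] at hNT
    linarith
  have hsq : T^2 ≤ (2*(C:ℝ)*(N:ℝ))^2 := by nlinarith
  calc 1/(64*(C:ℝ)^2*(D:ℝ))*T^2 ≤ 1/(64*(C:ℝ)^2*(D:ℝ))*(2*(C:ℝ)*(N:ℝ))^2 :=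
        mul_le_mul_of_nonneg_left hsq (by positivity)
    _ = (N:ℝ)^2/(16*(D:ℝ)) := by field_simp; ring
    _ ≤ (ratCount (Set.Ioo a b) T : ℝ) := hmain

/-- Implication 1 ⇒ 2 of Proposition 4.2 (contrapositive computation): if
`E ⊆ ℝ` has empty interior and is dense in a nonempty open interval
`I = (a, b)`, then `I ∩ E` and `I \ E` equal their own transcendental parts,
the rational counts are additive, `#I(ℚ,T)` grows at least like `c T²`, and
in particular it is not the case that both `#(I∩E)(ℚ,T)` and `#(I\E)(ℚ,T)`
are `o(T)`. -/
theorem dense_codense_not_littleO (E : Set ℝ) (hE : interior E = ∅)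
    (a b : ℝ) (hab : a < b) (hdense : Set.Ioo a b ⊆ closure E) :
    transPart (Set.Ioo a b ∩ E) = Set.Ioo a b ∩ E ∧
    transPart (Set.Ioo a b \ E) = Set.Ioo a b \ E ∧
    (∀ T : ℝ, ratCount (Set.Ioo a b) T =
      ratCount (Set.Ioo a b ∩ E) T + ratCount (Set.Ioo a b \ E) T) ∧
    (∃ c : ℝ, 0 < c ∧ ∀ᶠ T in Filter.atTop,
      c * T ^ 2 ≤ (ratCount (Set.Ioo a b) T : ℝ)) ∧
    ¬ ((fun T : ℝ => (ratCount (Set.Ioo a b ∩ E) T : ℝ)) =o[Filter.atTop]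
          (fun T => T) ∧
        (fun T : ℝ => (ratCount (Set.Ioo a b \ E) T : ℝ)) =o[Filter.atTop]
          (fun T => T)) := by
  have hIoo : ∃ c : ℝ, 0 < c ∧ ∀ᶠ T in Filter.atTop,
      c * T ^ 2 ≤ (ratCount (Set.Ioo a b) T : ℝ) := ratCount_Ioo_lower a b hab
  refine ⟨?_, ?_, fun T => ratCount_split _ E T, hIoo, ?_⟩
  · apply transPart_eq_self
    intro U hU hUne hsub
    have hUE : U ⊆ interior E := interior_maximal (fun x hx => (hsub hx).2) hU
    rw [hE] at hUE
    obtain ⟨x, hx⟩ := hUne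
    exact absurd (hUE hx) (Set.notMem_empty x)
  · apply transPart_eq_self
    intro U hU hUne hsub
    obtain ⟨x, hx⟩ := hUne
    have hxI : x ∈ Set.Ioo a b := (hsub hx).1
    obtain ⟨y, hy⟩ := (mem_closure_iff.mp (hdense hxI)) U hU hx
    exact (hsub hy.1).2 hy.2
  · rintro ⟨h1, h2⟩
    obtain ⟨c, hc, hev⟩ := hIoo
    have hsum : (fun T : ℝ => (ratCount (Set.Ioo a b) T : ℝ)) =o[Filter.atTop]
        (fun T : ℝ => T) := by
      have := h1.add h2
      refine this.congr' ?_ (by rfl)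
      filter_upwards with T
      rw [ratCount_split (Set.Ioo a b) E T]
      push_cast
      ring
    have hb := hsum.bound one_pos
    have : ∀ᶠ T : ℝ in Filter.atTop, False := by
      filter_upwards [hev, hb, Filter.eventually_ge_atTop (max 1 (2 / c))] with T hT1 hT2 hT3
      have hT1' : (1:ℝ) ≤ T := le_trans (le_max_left _ _) hT3
      have hTc : 2 / c ≤ T := le_trans (le_max_right _ _) hT3
      have hpos : 0 < T := lt_of_lt_of_le one_pos hT1'
      have h4 : c * T ^ 2 ≤ 1 * T := by
        calc c * T ^ 2 ≤ (ratCount (Set.Ioo a b) T : ℝ) := hT1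
          _ ≤ ‖(ratCount (Set.Ioo a b) T : ℝ)‖ := le_abs_self _
          _ ≤ 1 * ‖T‖ := hT2
          _ = 1 * T := by rw [Real.norm_of_nonneg hpos.le]
      have h5 : c * T ≤ 1 := le_of_mul_le_mul_right (by nlinarith) hpos
      have h6 : 2 ≤ c * T := by
        have := mul_le_mul_of_nonneg_left hTc hc.le
        rwa [mul_div_cancel₀ _ hc.ne'] at this
      linarith
    simpa using this.exists
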